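/- arXiv:2310.03822 — 3 statements merged into one kernel-verified Lean document; each statement's English description precedes it below -/
import Mathlib

section
/- Let R be a supercommutative superring. An ideal 𝔭 of R is prime (R/𝔭 is a domain) if and only if 𝔭 is a proper ideal such that whenever homogeneous elements x, y ∈ R satisfy xy ∈ 𝔭, then x ∈ 𝔭 or y ∈ 𝔭 (i.e., every prime ideal of a supercommutative superring is completely prime). -/
open DirectSum

/-- A `ZMod 2`-grading on a ring is supercommutative if homogeneous elements satisfy the
sign rule `x * y = (-1)^(|x||y|) * (y * x)`. -/
def SuperCommutative {R : Type*} [Ring R] (𝒜 : ZMod 2 → AddSubgroup R) : Prop :=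
  ∀ (i j : ZMod 2) (x y : R), x ∈ 𝒜 i → y ∈ 𝒜 j →
    x * y = ((-1 : ℤ) ^ (i.val * j.val)) • (y * x)

/-- `2` is a non-zerodivisor in `R`. -/
def TwoRegular (R : Type*) [Ring R] : Prop := ∀ x : R, 2 * x = 0 → x = 0

/-- A two-sided ideal is a superideal if it is graded, i.e. it contains the homogeneous
components of each of its elements. -/
def IsSuperIdeal {R : Type*} [Ring R] (𝒜 : ZMod 2 → AddSubgroup R) [GradedRing 𝒜]
    (I : TwoSidedIdeal R) : Prop :=
  ∀ x ∈ I, ∀ i, (DirectSum.decompose 𝒜 x i : R) ∈ I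

/-- An ideal of a superring is prime if the quotient ring is an integral domain. -/
def IsPrimeSuperIdeal {R : Type*} [Ring R] (I : TwoSidedIdeal R) : Prop :=
  IsDomain I.ringCon.Quotient

/-- An ideal of a superring is maximal if the quotient ring is a field. -/
def IsMaximalSuperIdeal {R : Type*} [Ring R] (I : TwoSidedIdeal R) : Prop :=
  IsField I.ringCon.Quotient

/-- A superring is Noetherian if it satisfies the ascending chain condition on superideals. -/
def SuperNoetherian {R : Type*} [Ring R] (𝒜 : ZMod 2 → AddSubgroup R) [GradedRing 𝒜] : Prop :=
  ∀ f : ℕ →o TwoSidedIdeal R, (∀ n, IsSuperIdeal 𝒜 (f n)) → ∃ n, ∀ m, n ≤ m → f m = f n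

/-!
By supercommutativity an odd `x` satisfies `x² = -x²`, so `x² = 0` because `2` is regular, and
primality on homogeneous elements puts `x` in `𝔭`. Hence every element is congruent modulo `𝔭`
to its even component, and `ab ∈ 𝔭` reduces to `a₀b₀ ∈ 𝔭` with `a₀, b₀` even.
-/

theorem TwoSidedIdeal.isDomain_ringCon_quotient_iff {R : Type*} [Ring R] (I : TwoSidedIdeal R) :
    IsDomain I.ringCon.Quotient ↔ (1 : R) ∉ I ∧ ∀ a b : R, a * b ∈ I → a ∈ I ∨ b ∈ I := by
  have mem_iff_eq_zero (x : R) : x ∈ I ↔ (x : I.ringCon.Quotient) = 0 :=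
    (I.mem_iff x).trans (RingCon.eq _).symm
  simp only [isDomain_iff_noZeroDivisors_and_nontrivial, noZeroDivisors_iff,
    ← not_subsingleton_iff_nontrivial, ← subsingleton_iff_zero_eq_one, mem_iff_eq_zero,
    RingCon.coe_mul, RingCon.coe_one, eq_comm (a := (0 : I.ringCon.Quotient))]
  refine and_comm.trans (and_congr_right fun _ => ⟨fun h a b => h, fun h a b => ?_⟩)
  induction a using Quot.ind
  induction b using Quot.ind
  exact h _ _

theorem SuperCommutative.mul_self_eq_zero_of_mem_odd {R : Type*} [Ring R]
    {𝒜 : ZMod 2 → AddSubgroup R} (hsc : SuperCommutative 𝒜) (h2 : TwoRegular R) {x : R}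
    (hx : x ∈ 𝒜 1) : x * x = 0 := by
  have h : x * x = -(x * x) := by simpa [ZMod.val_one] using hsc 1 1 x x hx hx
  apply h2
  rw [two_mul]
  nth_rewrite 1 [h]
  exact neg_add_cancel _

theorem decompose_zero_add_decompose_one {R : Type*} [AddCommGroup R]
    (𝒜 : ZMod 2 → AddSubgroup R) [Decomposition 𝒜] (a : R) :
    (decompose 𝒜 a 0 : R) + decompose 𝒜 a 1 = a := by
  conv_rhs => rw [← (decompose 𝒜).symm_apply_apply a, ← sum_univ_of (decompose 𝒜 a)]
  simp only [decompose_symm_sum, decompose_symm_of]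
  exact (Fin.sum_univ_two fun i : Fin 2 => (decompose 𝒜 a i : R)).symm

section OddInIdeal

variable {R : Type*} [Ring R] {𝒜 : ZMod 2 → AddSubgroup R} [Decomposition 𝒜]
  {I : TwoSidedIdeal R}

theorem TwoSidedIdeal.ringCon_decompose_zero (hodd : ∀ x ∈ 𝒜 1, x ∈ I) (a : R) :
    I.ringCon a (decompose 𝒜 a 0) := by
  rw [I.rel_iff, sub_eq_of_eq_add' (decompose_zero_add_decompose_one 𝒜 a).symm]
  exact hodd _ (decompose 𝒜 a 1).2

theorem TwoSidedIdeal.mem_iff_decompose_zero_mem (hodd : ∀ x ∈ 𝒜 1, x ∈ I) (a : R) :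
    a ∈ I ↔ (decompose 𝒜 a 0 : R) ∈ I := by
  have ha := I.ringCon_decompose_zero hodd a
  exact ⟨I.ringCon.trans (I.ringCon.symm ha), I.ringCon.trans ha⟩

theorem TwoSidedIdeal.mem_or_mem_of_mul_mem_of_even
    (hodd : ∀ x ∈ 𝒜 1, x ∈ I) (heven : ∀ x ∈ 𝒜 0, ∀ y ∈ 𝒜 0, x * y ∈ I → x ∈ I ∨ y ∈ I)
    {a b : R} (hab : a * b ∈ I) : a ∈ I ∨ b ∈ I := by
  have hab₀ : (decompose 𝒜 a 0 : R) * decompose 𝒜 b 0 ∈ I :=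
    I.ringCon.trans (I.ringCon.symm <| I.ringCon.mul (I.ringCon_decompose_zero hodd a)
      (I.ringCon_decompose_zero hodd b)) hab
  rw [I.mem_iff_decompose_zero_mem hodd a, I.mem_iff_decompose_zero_mem hodd b]
  exact heven _ (decompose 𝒜 a 0).2 _ (decompose 𝒜 b 0).2 hab₀

end OddInIdeal

/-- An ideal `𝔭` of a supercommutative superring is prime (`R/𝔭` is a domain) iff it is
proper and completely prime on homogeneous elements. -/
theorem prime_iff_homogeneous_completely_prime {R : Type*} [Ring R]
    (𝒜 : ZMod 2 → AddSubgroup R) [GradedRing 𝒜]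
    (hsc : SuperCommutative 𝒜) (h2 : TwoRegular R) (𝔭 : TwoSidedIdeal R) :
    IsPrimeSuperIdeal 𝔭 ↔
      ((1 : R) ∉ 𝔭 ∧
        ∀ x y : R, (∃ i, x ∈ 𝒜 i) → (∃ j, y ∈ 𝒜 j) → x * y ∈ 𝔭 → x ∈ 𝔭 ∨ y ∈ 𝔭) := by
  rw [IsPrimeSuperIdeal, 𝔭.isDomain_ringCon_quotient_iff]
  refine ⟨fun ⟨h1, hprime⟩ => ⟨h1, fun x y _ _ => hprime x y⟩, fun ⟨h1, hhom⟩ => ⟨h1, ?_⟩⟩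
  have hodd : ∀ x ∈ 𝒜 1, x ∈ 𝔭 := fun x hx => by
    have hxx : x * x ∈ 𝔭 := hsc.mul_self_eq_zero_of_mem_odd h2 hx ▸ 𝔭.zero_mem
    exact (hhom x x ⟨1, hx⟩ ⟨1, hx⟩ hxx).elim id id
  exact fun a b => 𝔭.mem_or_mem_of_mul_mem_of_even hodd
    fun x hx y hy => hhom x y ⟨0, hx⟩ ⟨0, hy⟩
end

section
/- Let R be a supercommutative superring. A superring R is Noetherian (satisfies the ascending chain condition on graded ideals) if and only if R₀ is a Noetherian commutative ring and R₁ is a finitely generated R₀-module. -/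
open DirectSum

/-! Supercommutativity makes the left ideal `R • S` generated by homogeneous elements `S ⊆ Rᵢ`
two-sided, and its degree-`i` part is the `R₀`-span of `S`. Hence `N ↦ R • N` embeds the lattice
of `R₀`-submodules of `Rᵢ` into the lattice of superideals, so the ascending chain condition on
superideals makes `R₀` and `R₁` Noetherian `R₀`-modules. Conversely, `R = R₀ ⊕ R₁` is then a
finite module over the Noetherian ring `R₀`, and every two-sided ideal is an `R₀`-submodule. -/

section Graded

variable {ι R : Type*} [Ring R] [DecidableEq ι] [AddGroup ι]
  {𝒜 : ι → AddSubgroup R} [GradedRing 𝒜]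

local notation "R₀" => SetLike.GradeZero.subring 𝒜

variable (𝒜) in
def gradeSubmodule (i : ι) : Submodule R₀ R where
  carrier := 𝒜 i
  add_mem' := add_mem
  zero_mem' := zero_mem _
  smul_mem' c _ hx := zero_add i ▸ SetLike.mul_mem_graded c.2 hx

variable (𝒜) in
def gradeZeroEquiv : R₀ ≃ₗ[R₀] gradeSubmodule 𝒜 0 where
  toFun c := ⟨c, c.2⟩
  invFun x := ⟨x, x.2⟩
  map_add' _ _ := rfl
  map_smul' _ _ := rfl

lemma coe_decompose_mul_of_mem_right {i : ι} {s : R} (hs : s ∈ 𝒜 i) (r : R) (j : ι) :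
    (decompose 𝒜 (r * s) j : R) = decompose 𝒜 r (j - i) * s := by
  conv_lhs => rw [← sub_add_cancel j i]
  exact coe_decompose_mul_add_of_right_mem 𝒜 hs

lemma coe_decompose_mem_of_mem_span {i j : ι} {S : Set R} (hS : S ⊆ 𝒜 i) {T : AddSubmonoid R}
    (hT : ∀ r, ∀ s ∈ S, (decompose 𝒜 r (j - i) : R) * s ∈ T) {x : R}
    (hx : x ∈ Submodule.span R S) : (decompose 𝒜 x j : R) ∈ T := by
  induction hx using Submodule.closure_induction with
  | zero => simp
  | add x y _ _ hx hy => simpa using add_mem hx hy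
  | smul_mem r s hs =>
    rw [smul_eq_mul, coe_decompose_mul_of_mem_right (hS hs)]
    exact hT r s hs

lemma coe_decompose_mem_span {i : ι} {S : Set R} (hS : S ⊆ 𝒜 i) {x : R}
    (hx : x ∈ Submodule.span R S) (j : ι) : (decompose 𝒜 x j : R) ∈ Submodule.span R S :=
  coe_decompose_mem_of_mem_span (T := (Submodule.span R S).toAddSubmonoid) hS
    (fun _ _ hs => Submodule.smul_mem _ _ (Submodule.subset_span hs)) hx

lemma coe_decompose_mem_span_gradeZero {i : ι} {S : Set R} (hS : S ⊆ 𝒜 i) {x : R}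
    (hx : x ∈ Submodule.span R S) : (decompose 𝒜 x i : R) ∈ Submodule.span R₀ S :=
  coe_decompose_mem_of_mem_span (T := (Submodule.span R₀ S).toAddSubmonoid) hS
    (fun r _ hs => by
      rw [sub_self]
      exact Submodule.smul_mem _ (⟨_, (decompose 𝒜 r 0).2⟩ : R₀) (Submodule.subset_span hs)) hx

lemma mem_closure_gradeZero_mul_iff_mem_span {n : ℕ} {g : Fin n → R} {y : R} :
    y ∈ AddSubgroup.closure {x : R | ∃ a ∈ 𝒜 0, ∃ j : Fin n, x = a * g j} ↔
      y ∈ Submodule.span R₀ (Set.range g) := by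
  constructor
  · intro hy
    refine AddSubgroup.closure_le (K := (Submodule.span R₀ (Set.range g)).toAddSubgroup)
      |>.mpr ?_ hy
    rintro _ ⟨a, ha, j, rfl⟩
    exact Submodule.smul_mem _ (⟨a, ha⟩ : R₀) (Submodule.subset_span ⟨j, rfl⟩)
  · intro hy
    induction hy using Submodule.closure_induction with
    | zero => exact zero_mem _
    | add _ _ _ _ hx hy => exact add_mem hx hy
    | smul_mem a _ hx =>
      obtain ⟨j, rfl⟩ := hx
      exact AddSubgroup.subset_closure ⟨a, a.2, j, rfl⟩

lemma gradeSubmodule_fg_iff {i : ι} : (gradeSubmodule 𝒜 i).FG ↔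
    ∃ (n : ℕ) (g : Fin n → R), (∀ j, g j ∈ 𝒜 i) ∧
      ∀ y ∈ 𝒜 i, y ∈ AddSubgroup.closure {x : R | ∃ a ∈ 𝒜 0, ∃ j : Fin n, x = a * g j} := by
  simp only [Submodule.fg_iff_exists_fin_generating_family, mem_closure_gradeZero_mul_iff_mem_span,
    le_antisymm_iff, Submodule.span_le, Set.range_subset_iff]
  rfl

lemma iSup_gradeSubmodule : ⨆ i, gradeSubmodule 𝒜 i = ⊤ := by
  refine Submodule.eq_top_iff'.mpr fun x => ?_
  induction x using DirectSum.Decomposition.inductionOn 𝒜 with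
  | zero => exact zero_mem _
  | homogeneous m => exact Submodule.mem_iSup_of_mem _ m.2
  | add x y hx hy => exact add_mem hx hy

lemma gradeSubmodule_zero_fg : (gradeSubmodule 𝒜 0).FG :=
  Module.Finite.iff_fg.mp (Module.Finite.equiv (gradeZeroEquiv 𝒜))

lemma finite_of_fg_gradeSubmodule [Finite ι] (h : ∀ i, (gradeSubmodule 𝒜 i).FG) :
    Module.Finite R₀ R :=
  Module.finite_def.mpr (iSup_gradeSubmodule (𝒜 := 𝒜) ▸ Submodule.fg_iSup _ h)

end Graded

lemma TwoSidedIdeal.wellFoundedGT_of_isNoetherian {R : Type*} [Ring R] (S : Subring R)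
    [IsNoetherian S R] : WellFoundedGT (TwoSidedIdeal R) :=
  (strictMono_of_le_iff_le (f := fun I : TwoSidedIdeal R => I.asIdeal.restrictScalars S)
    fun _ _ => Iff.rfl).wellFoundedGT

section Super

variable {R : Type*} [Ring R] {𝒜 : ZMod 2 → AddSubgroup R} [GradedRing 𝒜]

local notation "R₀" => SetLike.GradeZero.subring 𝒜

namespace SuperCommutative

variable {i : ZMod 2} {S : Set R}

lemma mul_mem_span (hsc : SuperCommutative 𝒜) (hS : S ⊆ 𝒜 i) {x : R}
    (hx : x ∈ Submodule.span R S) (r : R) : x * r ∈ Submodule.span R S := by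
  induction hx using Submodule.closure_induction with
  | zero => simp
  | add x y _ _ hx hy => rw [add_mul]; exact add_mem hx hy
  | smul_mem c s hs =>
    rw [smul_eq_mul, mul_assoc]
    refine Submodule.smul_mem _ c ?_
    induction r using DirectSum.Decomposition.inductionOn 𝒜 with
    | zero => simp
    | homogeneous r =>
      rw [hsc i _ s r (hS hs) r.2]
      exact zsmul_mem (Submodule.smul_mem _ _ (Submodule.subset_span hs)) _
    | add r r' hr hr' => rw [mul_add]; exact add_mem hr hr'

lemma mem_span_iff (hsc : SuperCommutative 𝒜) (hS : S ⊆ 𝒜 i) {x : R} :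
    x ∈ TwoSidedIdeal.span S ↔ x ∈ Submodule.span R S := by
  constructor
  · intro hx
    induction hx using TwoSidedIdeal.span_induction with
    | mem x hx => exact Submodule.subset_span hx
    | zero => exact zero_mem _
    | add _ _ _ _ hx hy => exact add_mem hx hy
    | neg _ _ hx => exact neg_mem hx
    | left_absorb a _ _ hx => exact Submodule.smul_mem _ a hx
    | right_absorb b _ _ hx => exact hsc.mul_mem_span hS hx b
  · exact fun hx => Submodule.span_le (p := (TwoSidedIdeal.span S).asIdeal) |>.mpr
      TwoSidedIdeal.subset_span hx

lemma isSuperIdeal_span (hsc : SuperCommutative 𝒜) (hS : S ⊆ 𝒜 i) :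
    IsSuperIdeal 𝒜 (TwoSidedIdeal.span S) := by
  intro x hx j
  rw [hsc.mem_span_iff hS] at hx ⊢
  exact coe_decompose_mem_span hS hx j

lemma span_le_span_iff (hsc : SuperCommutative 𝒜) {N M : Submodule R₀ R}
    (hN : N ≤ gradeSubmodule 𝒜 i) (hM : M ≤ gradeSubmodule 𝒜 i) :
    TwoSidedIdeal.span (N : Set R) ≤ TwoSidedIdeal.span M ↔ N ≤ M := by
  refine ⟨fun h x hx => ?_, fun h => TwoSidedIdeal.span_mono h⟩
  have hxM : x ∈ Submodule.span R M :=
    (hsc.mem_span_iff hM).mp (h (TwoSidedIdeal.subset_span hx))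
  have := coe_decompose_mem_span_gradeZero hM hxM
  rwa [decompose_of_mem_same 𝒜 (hN hx), Submodule.span_eq] at this

end SuperCommutative

lemma SuperNoetherian.wellFoundedGT (h : SuperNoetherian 𝒜) :
    WellFoundedGT {I : TwoSidedIdeal R // IsSuperIdeal 𝒜 I} := by
  rw [wellFoundedGT_iff_monotone_chain_condition]
  intro f
  obtain ⟨n, hn⟩ := h ⟨fun n => (f n).1, fun _ _ hab => f.monotone hab⟩ fun n => (f n).2
  exact ⟨n, fun m hm => Subtype.ext (hn m hm).symm⟩

lemma superNoetherian_of_wellFoundedGT [WellFoundedGT (TwoSidedIdeal R)] : SuperNoetherian 𝒜 :=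
  fun f _ => (WellFoundedGT.monotone_chain_condition f).imp fun _ h m hm => (h m hm).symm

lemma SuperNoetherian.isNoetherian_gradeSubmodule (hsc : SuperCommutative 𝒜)
    (h : SuperNoetherian 𝒜) (i : ZMod 2) : IsNoetherian R₀ (gradeSubmodule 𝒜 i) := by
  have := h.wellFoundedGT
  have : WellFoundedGT {N : Submodule R₀ R // N ≤ gradeSubmodule 𝒜 i} := by
    refine StrictMono.wellFoundedGT (β := {I // IsSuperIdeal 𝒜 I})
      (f := fun N => ⟨TwoSidedIdeal.span N.1, hsc.isSuperIdeal_span N.2⟩) ?_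
    exact strictMono_of_le_iff_le fun N M => (hsc.span_le_span_iff N.2 M.2).symm
  rw [isNoetherian_iff']
  exact (Submodule.MapSubtype.orderIso _).toOrderEmbedding.wellFoundedGT

end Super

theorem superNoetherian_iff_general {R : Type*} [Ring R]
    (𝒜 : ZMod 2 → AddSubgroup R) [GradedRing 𝒜]
    (hsc : SuperCommutative 𝒜) :
    SuperNoetherian 𝒜 ↔
      (IsNoetherianRing (SetLike.GradeZero.subring 𝒜) ∧
        ∃ (n : ℕ) (g : Fin n → R), (∀ j, g j ∈ 𝒜 1) ∧
          ∀ y ∈ 𝒜 1, y ∈ AddSubgroup.closure {x : R | ∃ a ∈ 𝒜 0, ∃ j : Fin n, x = a * g j}) := by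
  constructor
  · intro h
    have := h.isNoetherian_gradeSubmodule hsc
    refine ⟨isNoetherian_of_linearEquiv (gradeZeroEquiv 𝒜).symm, gradeSubmodule_fg_iff.mp ?_⟩
    exact Module.Finite.iff_fg.mp inferInstance
  · rintro ⟨hR₀, hR₁⟩
    have : Module.Finite (SetLike.GradeZero.subring 𝒜) R :=
      finite_of_fg_gradeSubmodule fun i => by
        fin_cases i
        exacts [gradeSubmodule_zero_fg, gradeSubmodule_fg_iff.mpr hR₁]
    have := isNoetherian_of_isNoetherianRing_of_finite (SetLike.GradeZero.subring 𝒜) R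
    have := TwoSidedIdeal.wellFoundedGT_of_isNoetherian (SetLike.GradeZero.subring 𝒜)
    exact superNoetherian_of_wellFoundedGT

/-- A superring is Noetherian iff `R₀` is a Noetherian (commutative) ring and `R₁` is a
finitely generated `R₀`-module. -/
theorem superNoetherian_iff {R : Type*} [Ring R]
    (𝒜 : ZMod 2 → AddSubgroup R) [GradedRing 𝒜]
    (hsc : SuperCommutative 𝒜) (h2 : TwoRegular R) :
    SuperNoetherian 𝒜 ↔
      (IsNoetherianRing (SetLike.GradeZero.subring 𝒜) ∧
        ∃ (n : ℕ) (g : Fin n → R), (∀ j, g j ∈ 𝒜 1) ∧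
          ∀ y ∈ 𝒜 1, y ∈ AddSubgroup.closure {x : R | ∃ a ∈ 𝒜 0, ∃ j : Fin n, x = a * g j}) :=
  superNoetherian_iff_general 𝒜 hsc
end

section
/- Let R ⊆ R' ⊆ R'' be supercommutative superrings with compatible gradings. If R'' is integral over R' and R' is integral over R, then R'' is integral over R (transitivity of integral closure for superrings). In particular, the integral closure of R in R' is integrally closed in R'. -/
/-!
Every finite set of elements of `R'` has a common witness module over `R`: if `Q = Σ R·wᵤ` is
stable under some elements and `M = Σ R·hₜ` under a homogeneous `e`, then the even products
`wᵤhₜ` span a unitary module stable under all of them, because even elements are central and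
a homogeneous `e` moves past `a ∈ R` at the cost of the sign twist `a₀ ± a₁ ∈ R`. Now let `c`
be homogeneous with witness `N = Σ R'·gⱼ`; only finitely many coefficients of `R'` express `1`
and the `c·gⱼ` in terms of the `gⱼ`. Choosing `Q` stable under all of them, the products
`wᵤgⱼ` span a unitary `R`-module stable under `c`.
-/

open DirectSum

/-- A homogeneous element `b` of the ambient superring is integral over the subring `A`
(with witness module inside the subring `W`): there is a unitary even finitely generated
`A`-supermodule `M = A·g₁ + ⋯ + A·gₙ` with `g₁, …, gₙ` even elements of `W`, `1 ∈ M`,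
and `bM ⊆ M`. -/
def IsIntegralElemIn {R : Type*} [Ring R] (𝒜 : ZMod 2 → AddSubgroup R)
    (A W : Subring R) (b : R) : Prop :=
  ∃ (n : ℕ) (g : Fin n → R), (∀ j, g j ∈ 𝒜 0 ∧ g j ∈ W) ∧
    (1 : R) ∈ AddSubgroup.closure {x : R | ∃ a ∈ A, ∃ j : Fin n, x = a * g j} ∧
    ∀ x ∈ AddSubgroup.closure {x : R | ∃ a ∈ A, ∃ j : Fin n, x = a * g j},
      b * x ∈ AddSubgroup.closure {x : R | ∃ a ∈ A, ∃ j : Fin n, x = a * g j}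

/-- An element is integral over `A` if all of its homogeneous components are. -/
def IsIntegralIn {R : Type*} [Ring R] (𝒜 : ZMod 2 → AddSubgroup R) [GradedRing 𝒜]
    (A W : Subring R) (b : R) : Prop :=
  ∀ i, IsIntegralElemIn 𝒜 A W (DirectSum.decompose 𝒜 b i : R)

section Span

variable {R : Type*} [Ring R]

def leftSpan (A : Subring R) {ι : Type*} (g : ι → R) : AddSubgroup R :=
  AddSubgroup.closure {x : R | ∃ a ∈ A, ∃ j : ι, x = a * g j}

def leftStabilizer (M : AddSubgroup R) : Subring R where
  carrier := {z | ∀ x ∈ M, z * x ∈ M}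
  one_mem' x hx := by rwa [one_mul]
  mul_mem' hz hz' x hx := by rw [mul_assoc]; exact hz _ (hz' x hx)
  zero_mem' x _ := by rw [zero_mul]; exact M.zero_mem
  add_mem' hz hz' x hx := by rw [add_mul]; exact M.add_mem (hz x hx) (hz' x hx)
  neg_mem' hz x hx := by rw [neg_mul]; exact M.neg_mem (hz x hx)

theorem isIntegralElemIn_iff (𝒜 : ZMod 2 → AddSubgroup R) (A W : Subring R) (b : R) :
    IsIntegralElemIn 𝒜 A W b ↔ ∃ (n : ℕ) (g : Fin n → R), (∀ j, g j ∈ 𝒜 0 ∧ g j ∈ W) ∧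
      (1 : R) ∈ leftSpan A g ∧ b ∈ leftStabilizer (leftSpan A g) :=
  Iff.rfl

theorem mul_mem_leftSpan {A : Subring R} {ι : Type*} (g : ι → R) {a : R} (ha : a ∈ A)
    (j : ι) : a * g j ∈ leftSpan A g :=
  AddSubgroup.subset_closure ⟨a, ha, j, rfl⟩

theorem mem_leftSpan (A : Subring R) {ι : Type*} (g : ι → R) (j : ι) : g j ∈ leftSpan A g := by
  simpa using mul_mem_leftSpan g A.one_mem j

theorem leftSpan_mono {A A' : Subring R} (h : A ≤ A') {ι : Type*} (g : ι → R) :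
    leftSpan A g ≤ leftSpan A' g :=
  AddSubgroup.closure_mono fun _ ⟨a, ha, j, hx⟩ => ⟨a, h ha, j, hx⟩

theorem mem_leftStabilizer_closure {s : Set R} {z : R}
    (h : ∀ x ∈ s, z * x ∈ AddSubgroup.closure s) :
    z ∈ leftStabilizer (AddSubgroup.closure s) := fun _ hx =>
  (AddSubgroup.closure_le ((AddSubgroup.closure s).comap (AddMonoidHom.mulLeft z))).mpr h hx

theorem le_leftStabilizer_leftSpan (A : Subring R) {ι : Type*} (g : ι → R) :
    A ≤ leftStabilizer (leftSpan A g) := fun a ha =>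
  mem_leftStabilizer_closure fun _ ⟨a', ha', j, hx⟩ => by
    rw [hx, ← mul_assoc]
    exact mul_mem_leftSpan g (A.mul_mem ha ha') j

theorem exists_finset_of_mem_leftSpan {B : Subring R} {ι : Type*} {g : ι → R} {x : R}
    (hx : x ∈ leftSpan B g) :
    ∃ T : Finset R, ↑T ⊆ (B : Set R) ∧ x ∈ leftSpan (Subring.closure ↑T) g := by
  classical
  induction hx using AddSubgroup.closure_induction with
  | mem y hy =>
    obtain ⟨b, hb, j, rfl⟩ := hy
    exact ⟨{b}, by simpa using hb, mul_mem_leftSpan g (Subring.subset_closure (by simp)) j⟩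
  | zero => exact ⟨∅, by simp, AddSubgroup.zero_mem _⟩
  | add y z _ _ ihy ihz =>
    obtain ⟨T, hTB, hy⟩ := ihy
    obtain ⟨T', hT'B, hz⟩ := ihz
    have hmono := fun (U : Finset R) (hU : U ⊆ T ∪ T') =>
      leftSpan_mono (Subring.closure_mono (Finset.coe_subset.mpr hU)) g
    refine ⟨T ∪ T', by simpa using And.intro hTB hT'B, AddSubgroup.add_mem _ ?_ ?_⟩
    · exact hmono T Finset.subset_union_left hy
    · exact hmono T' Finset.subset_union_right hz
  | neg y _ ihy =>
    obtain ⟨T, hTB, hy⟩ := ihy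
    exact ⟨T, hTB, AddSubgroup.neg_mem _ hy⟩

end Span

section Graded

variable {R : Type*} [Ring R] {𝒜 : ZMod 2 → AddSubgroup R} [GradedRing 𝒜]

theorem decompose_zero_add_decompose_one_s18 (x : R) :
    (decompose 𝒜 x 0 : R) + (decompose 𝒜 x 1 : R) = x := by
  classical
  calc (decompose 𝒜 x 0 : R) + (decompose 𝒜 x 1 : R)
      = ∑ i : ZMod 2, (decompose 𝒜 x i : R) :=
        (Fin.sum_univ_two fun i => (decompose 𝒜 x i : R)).symm
    _ = ∑ i ∈ (decompose 𝒜 x).support, (decompose 𝒜 x i : R) :=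
        (Finset.sum_subset (Finset.subset_univ _)
          fun i _ hi => by simpa using DFinsupp.notMem_support_iff.mp hi).symm
    _ = x := sum_support_decompose 𝒜 x

theorem homogeneous_mul_eq (hsc : SuperCommutative 𝒜) {d : ZMod 2} {e : R} (he : e ∈ 𝒜 d)
    (a : R) :
    e * a = ((decompose 𝒜 a 0 : R) + ((-1 : ℤ) ^ d.val) • (decompose 𝒜 a 1 : R)) * e := by
  have h0 := hsc d 0 e _ he (decompose 𝒜 a 0).2
  have h1 := hsc d 1 e _ he (decompose 𝒜 a 1).2
  simp only [ZMod.val_zero, ZMod.val_one, Nat.mul_zero, Nat.mul_one, pow_zero, one_smul]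
    at h0 h1
  conv_lhs => rw [← decompose_zero_add_decompose_one_s18 (𝒜 := 𝒜) a]
  rw [mul_add, add_mul, h0, h1, smul_mul_assoc]

theorem even_mul_comm (hsc : SuperCommutative 𝒜) {x : R} (hx : x ∈ 𝒜 0) (y : R) :
    x * y = y * x := by
  simpa [decompose_zero_add_decompose_one_s18] using homogeneous_mul_eq hsc hx y

theorem exists_homogeneous_mul_eq (hsc : SuperCommutative 𝒜) {A : Subring R}
    (hAgr : ∀ x ∈ A, ∀ i, (decompose 𝒜 x i : R) ∈ A) {d : ZMod 2} {e : R} (he : e ∈ 𝒜 d)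
    {a : R} (ha : a ∈ A) : ∃ a' ∈ A, e * a = a' * e :=
  ⟨_, A.add_mem (hAgr a ha 0) (A.toAddSubgroup.zsmul_mem (hAgr a ha 1) _),
    homogeneous_mul_eq hsc he a⟩

theorem homogeneous_mem_leftStabilizer (hsc : SuperCommutative 𝒜) {A : Subring R}
    (hAgr : ∀ x ∈ A, ∀ i, (decompose 𝒜 x i : R) ∈ A) {d : ZMod 2} {e : R} (he : e ∈ 𝒜 d)
    {ι : Type*} {g : ι → R} (hg : ∀ j, e * g j ∈ leftSpan A g) :
    e ∈ leftStabilizer (leftSpan A g) :=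
  mem_leftStabilizer_closure fun _ ⟨a, ha, j, hx⟩ => by
    obtain ⟨a', ha', hea⟩ := exists_homogeneous_mul_eq hsc hAgr he ha
    rw [hx, ← mul_assoc, hea, mul_assoc]
    exact le_leftStabilizer_leftSpan A g ha' _ (hg j)

end Graded

section PairProducts

variable {R : Type*} [Ring R]

/-- Indexed by `Fin (k * m)` so that it can serve as a witness in `IsIntegralElemIn`. -/
def pairProducts {k m : ℕ} (w : Fin k → R) (h : Fin m → R) : Fin (k * m) → R :=
  fun q => w (finProdFinEquiv.symm q).1 * h (finProdFinEquiv.symm q).2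

theorem mul_mul_mem_leftSpan_pairProducts {A : Subring R} {k m : ℕ} (w : Fin k → R)
    (h : Fin m → R) {a : R} (ha : a ∈ A) (u : Fin k) (t : Fin m) :
    a * (w u * h t) ∈ leftSpan A (pairProducts w h) := by
  simpa [pairProducts] using mul_mem_leftSpan (pairProducts w h) ha (finProdFinEquiv (u, t))

variable {𝒜 : ZMod 2 → AddSubgroup R} [GradedRing 𝒜]

theorem pairProducts_mem_even {k m : ℕ} {w : Fin k → R} {h : Fin m → R}
    (hw : ∀ u, w u ∈ 𝒜 0) (hh : ∀ t, h t ∈ 𝒜 0) (q : Fin (k * m)) :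
    pairProducts w h q ∈ 𝒜 0 := by
  simpa [pairProducts] using SetLike.mul_mem_graded (hw _) (hh _)

theorem mul_mem_leftSpan_pairProducts (hsc : SuperCommutative 𝒜) {A : Subring R} {k m : ℕ}
    {w : Fin k → R} (hw : ∀ u, w u ∈ 𝒜 0) (h : Fin m → R) {x y : R}
    (hx : x ∈ leftSpan A w) (hy : y ∈ leftSpan A h) :
    x * y ∈ leftSpan A (pairProducts w h) := by
  induction hx using AddSubgroup.closure_induction with
  | mem x hx =>
    obtain ⟨a, ha, u, rfl⟩ := hx
    induction hy using AddSubgroup.closure_induction with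
    | mem y hy =>
      obtain ⟨a', ha', t, rfl⟩ := hy
      rw [mul_assoc, ← mul_assoc (w u), even_mul_comm hsc (hw u) a', mul_assoc a',
        ← mul_assoc]
      exact mul_mul_mem_leftSpan_pairProducts w h (A.mul_mem ha ha') u t
    | zero => simp
    | add y z _ _ ihy ihz => rw [mul_add]; exact AddSubgroup.add_mem _ ihy ihz
    | neg y _ ihy => rw [mul_neg]; exact AddSubgroup.neg_mem _ ihy
  | zero => simp
  | add x x' _ _ ihx ihx' => rw [add_mul]; exact AddSubgroup.add_mem _ ihx ihx'
  | neg x _ ihx => rw [neg_mul]; exact AddSubgroup.neg_mem _ ihx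

theorem leftStabilizer_le_pairProducts (hsc : SuperCommutative 𝒜) {A : Subring R} {k m : ℕ}
    {w : Fin k → R} (hw : ∀ u, w u ∈ 𝒜 0) (h : Fin m → R) :
    leftStabilizer (leftSpan A w) ≤ leftStabilizer (leftSpan A (pairProducts w h)) :=
  fun z hz => mem_leftStabilizer_closure fun _ ⟨a, ha, q, hx⟩ => by
    rw [hx, pairProducts, ← mul_assoc a, ← mul_assoc]
    exact mul_mem_leftSpan_pairProducts hsc hw h (hz _ (mul_mem_leftSpan w ha _))
      (mem_leftSpan A h _)

/-- Coefficients stabilizing `leftSpan A w` may be moved into it past an even element. -/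
theorem even_mul_mem_leftSpan_pairProducts (hsc : SuperCommutative 𝒜) {A : Subring R}
    {k m : ℕ} {w : Fin k → R} (hw : ∀ u, w u ∈ 𝒜 0) {h : Fin m → R} {x y : R}
    (hx₀ : x ∈ 𝒜 0) (hx : x ∈ leftSpan A w)
    (hy : y ∈ leftSpan (leftStabilizer (leftSpan A w)) h) :
    x * y ∈ leftSpan A (pairProducts w h) := by
  refine (AddSubgroup.closure_le
    ((leftSpan A (pairProducts w h)).comap (AddMonoidHom.mulLeft x))).mpr ?_ hy
  rintro _ ⟨s, hs, t, rfl⟩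
  show x * (s * h t) ∈ leftSpan A (pairProducts w h)
  rw [← mul_assoc, even_mul_comm hsc hx₀ s]
  exact mul_mem_leftSpan_pairProducts hsc hw h (hs x hx) (mem_leftSpan A h t)

theorem one_mem_leftSpan_pairProducts (hsc : SuperCommutative 𝒜) {A : Subring R} {k m : ℕ}
    {w : Fin k → R} (hw : ∀ u, w u ∈ 𝒜 0) {h : Fin m → R} (hw₁ : (1 : R) ∈ leftSpan A w)
    (hh₁ : (1 : R) ∈ leftSpan (leftStabilizer (leftSpan A w)) h) :
    (1 : R) ∈ leftSpan A (pairProducts w h) := by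
  simpa using even_mul_mem_leftSpan_pairProducts hsc hw (SetLike.one_mem_graded 𝒜) hw₁ hh₁

theorem homogeneous_mem_leftStabilizer_pairProducts (hsc : SuperCommutative 𝒜)
    {A : Subring R} (hAgr : ∀ x ∈ A, ∀ i, (decompose 𝒜 x i : R) ∈ A) {k m : ℕ}
    {w : Fin k → R} (hw : ∀ u, w u ∈ 𝒜 0) {h : Fin m → R} {d : ZMod 2} {e : R}
    (he : e ∈ 𝒜 d) (heh : ∀ t, e * h t ∈ leftSpan (leftStabilizer (leftSpan A w)) h) :
    e ∈ leftStabilizer (leftSpan A (pairProducts w h)) :=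
  homogeneous_mem_leftStabilizer hsc hAgr he fun q => by
    rw [pairProducts, ← mul_assoc, ← even_mul_comm hsc (hw _) e, mul_assoc]
    exact even_mul_mem_leftSpan_pairProducts hsc hw (hw _) (mem_leftSpan A w _) (heh _)

end PairProducts

section CommonWitness

variable {R : Type*} [Ring R] {𝒜 : ZMod 2 → AddSubgroup R} [GradedRing 𝒜]

theorem exists_witness_adjoin (hsc : SuperCommutative 𝒜) {A W : Subring R}
    (hAgr : ∀ x ∈ A, ∀ i, (decompose 𝒜 x i : R) ∈ A) {k : ℕ} {w : Fin k → R}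
    (hw : ∀ u, w u ∈ 𝒜 0) (hw₁ : (1 : R) ∈ leftSpan A w) {d : ZMod 2} {e : R}
    (he : e ∈ 𝒜 d) (hint : IsIntegralElemIn 𝒜 A W e) :
    ∃ (k' : ℕ) (w' : Fin k' → R), (∀ u, w' u ∈ 𝒜 0) ∧ (1 : R) ∈ leftSpan A w' ∧
      leftStabilizer (leftSpan A w) ≤ leftStabilizer (leftSpan A w') ∧
      e ∈ leftStabilizer (leftSpan A w') := by
  obtain ⟨m, h, hh, hh₁, heh⟩ := (isIntegralElemIn_iff 𝒜 A W e).mp hint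
  have hA := leftSpan_mono (le_leftStabilizer_leftSpan A w) h
  exact ⟨_, pairProducts w h, pairProducts_mem_even hw fun t => (hh t).1,
    one_mem_leftSpan_pairProducts hsc hw hw₁ (hA hh₁),
    leftStabilizer_le_pairProducts hsc hw h,
    homogeneous_mem_leftStabilizer_pairProducts hsc hAgr hw he
      fun t => hA (heh _ (mem_leftSpan A h t))⟩

theorem exists_common_witness (hsc : SuperCommutative 𝒜) {A W : Subring R}
    (hAgr : ∀ x ∈ A, ∀ i, (decompose 𝒜 x i : R) ∈ A) (T : Finset R)
    (hT : ∀ z ∈ T, IsIntegralIn 𝒜 A W z) :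
    ∃ (k : ℕ) (w : Fin k → R), (∀ u, w u ∈ 𝒜 0) ∧ (1 : R) ∈ leftSpan A w ∧
      ↑T ⊆ (leftStabilizer (leftSpan A w) : Set R) := by
  classical
  induction T using Finset.induction_on with
  | empty =>
    exact ⟨1, fun _ => 1, fun _ => SetLike.one_mem_graded 𝒜, mem_leftSpan A _ 0, by simp⟩
  | insert z T _ ih =>
    obtain ⟨k, w, hw, hw₁, hTw⟩ := ih fun z' hz' => hT z' (Finset.mem_insert_of_mem hz')
    have hz := hT z (Finset.mem_insert_self z T)
    obtain ⟨k₀, w₀, hw₀, hw₀₁, hww₀, hz₀⟩ :=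
      exists_witness_adjoin hsc hAgr hw hw₁ (decompose 𝒜 z 0).2 (hz 0)
    obtain ⟨k₁, w₁, hw₁', hw₁₁, hw₀w₁, hz₁⟩ :=
      exists_witness_adjoin hsc hAgr hw₀ hw₀₁ (decompose 𝒜 z 1).2 (hz 1)
    refine ⟨k₁, w₁, hw₁', hw₁₁, ?_⟩
    rw [Finset.coe_insert, Set.insert_subset_iff]
    refine ⟨?_, hTw.trans fun x hx => hw₀w₁ (hww₀ hx)⟩
    rw [← decompose_zero_add_decompose_one_s18 (𝒜 := 𝒜) z]
    exact Subring.add_mem _ (hw₀w₁ hz₀) hz₁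

end CommonWitness

/-- `A`, `B` and the ambient ring play the roles of `R`, `R'` and `R''`. -/
theorem integral_transitivity_general {R : Type*} [Ring R]
    (𝒜 : ZMod 2 → AddSubgroup R) [GradedRing 𝒜]
    (hsc : SuperCommutative 𝒜)
    (A B : Subring R)
    (hAgr : ∀ x ∈ A, ∀ i, (DirectSum.decompose 𝒜 x i : R) ∈ A)
    (hBA : ∀ b ∈ B, IsIntegralIn 𝒜 A B b)
    (hRB : ∀ b : R, IsIntegralIn 𝒜 B ⊤ b) :
    ∀ b : R, IsIntegralIn 𝒜 A ⊤ b := by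
  classical
  intro b i
  obtain ⟨n, g, hg, hg₁, hcg⟩ := (isIntegralElemIn_iff 𝒜 B ⊤ _).mp (hRB b i)
  obtain ⟨T₁, hT₁B, hT₁⟩ := exists_finset_of_mem_leftSpan hg₁
  choose T hTB hT using fun j => exists_finset_of_mem_leftSpan (hcg _ (mem_leftSpan B g j))
  have hTB' : ↑(T₁ ∪ Finset.univ.biUnion T) ⊆ (B : Set R) := by
    simpa [Set.union_subset_iff] using And.intro hT₁B fun j => hTB j
  obtain ⟨k, w, hw, hw₁, hTw⟩ :=
    exists_common_witness hsc hAgr _ fun z hz => hBA z (hTB' hz)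
  have hcoeff : ∀ U ⊆ T₁ ∪ Finset.univ.biUnion T,
      leftSpan (Subring.closure ↑U) g ≤ leftSpan (leftStabilizer (leftSpan A w)) g :=
    fun U hU => leftSpan_mono (Subring.closure_le.mpr ((Finset.coe_subset.mpr hU).trans hTw)) g
  refine (isIntegralElemIn_iff 𝒜 A ⊤ _).mpr ⟨_, pairProducts w g,
    fun q => ⟨pairProducts_mem_even hw (fun j => (hg j).1) q, trivial⟩,
    one_mem_leftSpan_pairProducts hsc hw hw₁ (hcoeff _ Finset.subset_union_left hT₁),
    homogeneous_mem_leftStabilizer_pairProducts hsc hAgr hw (decompose 𝒜 b i).2 fun j => ?_⟩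
  exact hcoeff _ (Finset.subset_biUnion_of_mem T (Finset.mem_univ j) |>.trans
    Finset.subset_union_right) (hT j)

/-- Transitivity of integrality for superrings `R ⊆ R' ⊆ R''` (here `A ⊆ B ⊆ R` are graded
subrings of the ambient superring `R = R''`): if `R''` is integral over `R'` and `R'` is
integral over `R`, then `R''` is integral over `R`. -/
theorem integral_transitivity {R : Type*} [Ring R]
    (𝒜 : ZMod 2 → AddSubgroup R) [GradedRing 𝒜]
    (hsc : SuperCommutative 𝒜) (h2 : TwoRegular R)
    (A B : Subring R) (hAB : A ≤ B)
    (hAgr : ∀ x ∈ A, ∀ i, (DirectSum.decompose 𝒜 x i : R) ∈ A)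
    (hBgr : ∀ x ∈ B, ∀ i, (DirectSum.decompose 𝒜 x i : R) ∈ B)
    (hBA : ∀ b ∈ B, IsIntegralIn 𝒜 A B b)
    (hRB : ∀ b : R, IsIntegralIn 𝒜 B ⊤ b) :
    ∀ b : R, IsIntegralIn 𝒜 A ⊤ b :=
  integral_transitivity_general 𝒜 hsc A B hAgr hBA hRB
end
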